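/- arXiv:2202.02174 — 4 statements merged into one kernel-verified Lean document; each statement's English description precedes it below -/
import Mathlib

section
/- For a finite planar graph G and a vertex set X ⊆ V(G), the number of connected components C of G − X with |N_G(C)| ≥ 3 is at most 2·|X|. -/
/-! Take the vertices of `X` as branch sets and the components with at least three neighbours in
`X` as stars, each joined to three branch sets. A `K₃,₃`-minor-free graph admits at most
`2|A| - 4` such stars, by induction on `|A|`: with more, either three stars share their branch
sets, giving `K₃,₃`, or there is a smaller configuration with too many stars, obtained by deleting
a branch set met by at most two stars, by splitting along a set of branch sets that no star
straddles, or by contracting a linked set `W` of branch sets together with the stars having two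
branch sets in `W`. If none of this applies, fix a star at `a, b, d`: if two branch sets of
`A \ {a, b}` are linked, their component and its complement are both linked and one of them can
be contracted; otherwise every star at `d` is joined to `a, b, d`, giving three equal stars. -/

/-- A minor model of `H` in `G`: pairwise disjoint nonempty connected branch sets,
one for each vertex of `H`, with an edge of `G` between the branch sets of any two
vertices adjacent in `H`. `HasMinor G H` means `H` is a minor of `G`. -/
def HasMinor {α β : Type*} (G : SimpleGraph α) (H : SimpleGraph β) : Prop :=
  ∃ P : β → Set α,
    (∀ b, (P b).Nonempty) ∧
    (∀ b, (G.induce (P b)).Connected) ∧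
    (Pairwise (Function.onFun Disjoint P)) ∧
    (∀ b₁ b₂, H.Adj b₁ b₂ → ∃ a₁ ∈ P b₁, ∃ a₂ ∈ P b₂, G.Adj a₁ a₂)

/-- Planarity of a (finite) simple graph, via Wagner's theorem: a graph is planar
iff it contains neither `K₅` nor `K₃,₃` as a minor. -/
def IsPlanar {α : Type*} (G : SimpleGraph α) : Prop :=
  ¬ HasMinor G (⊤ : SimpleGraph (Fin 5)) ∧
    ¬ HasMinor G (completeBipartiteGraph (Fin 3) (Fin 3))

open Finset Function Relation SimpleGraph

open scoped Classical

section

variable {V : Type*} {G : SimpleGraph V}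

namespace SimpleGraph

def Touches (G : SimpleGraph V) (s t : Set V) : Prop :=
  ∃ u ∈ s, ∃ v ∈ t, G.Adj u v

lemma Touches.symm {s t : Set V} (h : G.Touches s t) : G.Touches t s :=
  let ⟨u, hu, v, hv, huv⟩ := h
  ⟨v, hv, u, hu, huv.symm⟩

lemma Touches.mono {s s' t t' : Set V} (h : G.Touches s t) (hs : s ⊆ s') (ht : t ⊆ t') :
    G.Touches s' t' :=
  let ⟨u, hu, v, hv, huv⟩ := h
  ⟨u, hs hu, v, ht hv, huv⟩

lemma hasMinor_completeBipartiteGraph {α β : Type*} (p : α → Set V) (q : β → Set V)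
    (hp : ∀ i, (G.induce (p i)).Connected) (hq : ∀ j, (G.induce (q j)).Connected)
    (hpp : Pairwise (Disjoint on p)) (hqq : Pairwise (Disjoint on q))
    (hpq : ∀ i j, Disjoint (p i) (q j)) (hadj : ∀ i j, G.Touches (p i) (q j)) :
    HasMinor G (completeBipartiteGraph α β) := by
  refine ⟨Sum.elim p q, ?_, ?_, ?_, ?_⟩
  · rintro (i | j)
    exacts [Set.nonempty_coe_sort.mp (hp i).nonempty, Set.nonempty_coe_sort.mp (hq j).nonempty]
  · rintro (i | j)
    exacts [hp i, hq j]
  · rintro (i | i) (j | j) hij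
    · exact hpp (fun h => hij (congrArg _ h))
    · exact hpq i j
    · exact (hpq j i).symm
    · exact hqq (fun h => hij (congrArg _ h))
  · rintro (i | i) (j | j) hab
    · simp at hab
    · exact hadj i j
    · exact (hadj j i).symm
    · simp at hab

lemma induce_sUnion_connected_of_reflTransGen {S : Set (Set V)} {s₀ : Set V} (hs₀ : s₀ ∈ S)
    (hS : ∀ s ∈ S, (G.induce s).Connected)
    (hreach : ∀ s ∈ S, ReflTransGen (fun s t => t ∈ S ∧ G.Touches s t) s₀ s) :
    (G.induce (⋃₀ S)).Connected := by
  have patch : ∀ s, ReflTransGen (fun s t => t ∈ S ∧ G.Touches s t) s₀ s →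
      ∃ T ⊆ ⋃₀ S, (G.induce T).Connected ∧ s₀ ⊆ T ∧ s ⊆ T := by
    intro s hs
    induction hs with
    | refl => exact ⟨s₀, Set.subset_sUnion_of_mem hs₀, hS s₀ hs₀, le_rfl, le_rfl⟩
    | tail _ hst ih =>
      obtain ⟨T, hTS, hT, hs₀T, hsT⟩ := ih
      obtain ⟨htS, u, hu, v, hv, huv⟩ := hst
      exact ⟨T ∪ _, Set.union_subset hTS (Set.subset_sUnion_of_mem htS),
        connected_induce_union hT.preconnected (hS _ htS).preconnected (hsT hu) hv huv,
        hs₀T.trans Set.subset_union_left, Set.subset_union_right⟩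
  obtain ⟨u, hu⟩ := Set.nonempty_coe_sort.mp (hS s₀ hs₀).nonempty
  refine G.induce_connected_of_patches u (Set.subset_sUnion_of_mem hs₀ hu) fun hv => ?_
  obtain ⟨s, hs, hvs⟩ := hv
  obtain ⟨T, hTS, hT, hs₀T, hsT⟩ := patch s (hreach s hs)
  exact ⟨T, hTS, hs₀T hu, hsT hvs, hT.preconnected _ _⟩

lemma induce_image_supp_connected {s : Set V}
    (C : (G.induce s).ConnectedComponent) : (G.induce (Subtype.val '' C.supp)).Connected :=
  C.connected_toSimpleGraph.map ⟨fun v => ⟨v.1.1, v.1, v.2, rfl⟩, id⟩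
    (by rintro ⟨_, v, hv, rfl⟩; exact ⟨⟨v, hv⟩, rfl⟩)

lemma ncard_le_card_filter_touches {X s : Set V} (hX : X.Finite) :
    {x | x ∈ X ∧ ∃ v ∈ s, G.Adj x v}.ncard ≤
      ((hX.toFinset.image fun x => ({x} : Set V)).filter (G.Touches s)).card := by
  have hN : {x | x ∈ X ∧ ∃ v ∈ s, G.Adj x v}.Finite := hX.subset fun _ hx => hx.1
  refine (Set.ncard_eq_toFinset_card _ hN).trans_le <|
    card_le_card_of_injOn (fun x => {x}) (fun x hx => ?_) Set.singleton_injective.injOn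
  obtain ⟨hxX, v, hv, hxv⟩ := hN.mem_toFinset.mp hx
  exact mem_filter.mpr ⟨mem_image_of_mem _ (hX.mem_toFinset.mpr hxX), v, hv, x, rfl, hxv.symm⟩

end SimpleGraph

lemma Finset.injOn_ite_mem {α : Type*} {s t W : Finset α} {z : α} (hs : s ⊆ t) (hz : z ∉ t \ W)
    (hsW : (s ∩ W).card ≤ 1) : Set.InjOn (fun a => if a ∈ W then z else a) s := by
  intro a ha b hb hab
  by_cases haW : a ∈ W <;> by_cases hbW : b ∈ W <;> simp only [haW, hbW, if_true, if_false] at hab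
  · exact card_le_one.mp hsW a (mem_inter.mpr ⟨ha, haW⟩) b (mem_inter.mpr ⟨hb, hbW⟩)
  · exact absurd (hab ▸ mem_sdiff.mpr ⟨hs hb, hbW⟩) hz
  · exact absurd (hab ▸ mem_sdiff.mpr ⟨hs ha, haW⟩) hz
  · exact hab

/-- Contracting all branch sets `A` and stars `I` gives a minor of `G` containing a bipartite
graph on `A ∪ I` in which each star `i` is adjacent to the three branch sets `N i`. -/
structure StarConfig (G : SimpleGraph V) where
  A : Finset (Set V)
  I : Finset (Set V)
  N : Set V → Finset (Set V)
  connected : ∀ s ∈ A ∪ I, (G.induce s).Connected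
  pairwiseDisjoint : (↑(A ∪ I) : Set (Set V)).Pairwise Disjoint
  disjoint_A_I : Disjoint A I
  N_subset : ∀ i ∈ I, N i ⊆ A
  card_N : ∀ i ∈ I, (N i).card = 3
  touches : ∀ i ∈ I, ∀ a ∈ N i, G.Touches i a

namespace StarConfig

section

variable (c : StarConfig G)

lemma disjoint_of_mem {s t : Set V} (hs : s ∈ c.A ∪ c.I) (ht : t ∈ c.A ∪ c.I) (hst : s ≠ t) :
    Disjoint s t :=
  c.pairwiseDisjoint (mem_coe.mpr hs) (mem_coe.mpr ht) hst

lemma ne_of_mem_A_of_mem_I {a i : Set V} (ha : a ∈ c.A) (hi : i ∈ c.I) : a ≠ i :=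
  fun h => disjoint_left.mp c.disjoint_A_I ha (h ▸ hi)

lemma three_le_card_A (hI : c.I.Nonempty) : 3 ≤ c.A.card :=
  let ⟨i, hi⟩ := hI
  c.card_N i hi ▸ card_le_card (c.N_subset i hi)

def restrict (A' I' : Finset (Set V)) (hA : A' ⊆ c.A) (hI : I' ⊆ c.I)
    (hN : ∀ i ∈ I', c.N i ⊆ A') : StarConfig G where
  A := A'
  I := I'
  N := c.N
  connected s hs := c.connected s (union_subset_union hA hI hs)
  pairwiseDisjoint := c.pairwiseDisjoint.mono (by exact_mod_cast union_subset_union hA hI)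
  disjoint_A_I := c.disjoint_A_I.mono hA hI
  N_subset := hN
  card_N i hi := c.card_N i (hI hi)
  touches i hi := c.touches i (hI hi)

theorem hasMinor_of_three_le_card_filter_N_eq (M : Finset (Set V))
    (hM : 3 ≤ (c.I.filter (c.N · = M)).card) :
    HasMinor G (completeBipartiteGraph (Fin 3) (Fin 3)) := by
  obtain ⟨T, hT, hT3⟩ := exists_subset_card_eq hM
  have hTI : ∀ i ∈ T, i ∈ c.I ∧ c.N i = M := fun i hi => mem_filter.mp (hT hi)
  obtain ⟨i₀, hi₀⟩ := card_pos.mp (by omega : 0 < T.card)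
  obtain ⟨hi₀I, rfl⟩ := hTI i₀ hi₀
  let eM := Fintype.equivFinOfCardEq (α := c.N i₀) (by simpa using c.card_N i₀ hi₀I) |>.symm
  let eT := Fintype.equivFinOfCardEq (α := T) (by simpa using hT3) |>.symm
  have hA : ∀ k, (eM k : Set V) ∈ c.A ∪ c.I := fun k =>
    mem_union_left _ (c.N_subset i₀ hi₀I (eM k).2)
  have hI : ∀ k, (eT k : Set V) ∈ c.A ∪ c.I := fun k => mem_union_right _ (hTI _ (eT k).2).1
  refine hasMinor_completeBipartiteGraph (fun k => eM k) (fun k => eT k)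
    (fun k => c.connected _ (hA k)) (fun k => c.connected _ (hI k))
    (fun k l hkl => c.disjoint_of_mem (hA k) (hA l) (by simpa [Subtype.val_inj] using hkl))
    (fun k l hkl => c.disjoint_of_mem (hI k) (hI l) (by simpa [Subtype.val_inj] using hkl))
    (fun k l => c.disjoint_of_mem (hA k) (hI l) (c.ne_of_mem_A_of_mem_I
      (c.N_subset i₀ hi₀I (eM k).2) (hTI _ (eT l).2).1)) (fun k l => ?_)
  obtain ⟨hlI, hlN⟩ := hTI _ (eT l).2
  exact (c.touches _ hlI _ (by rw [hlN]; exact (eM k).2)).symm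

def Linked (W : Finset (Set V)) (u v : Set V) : Prop :=
  u ∈ W ∧ v ∈ W ∧ u ≠ v ∧ ∃ i ∈ c.I, u ∈ c.N i ∧ v ∈ c.N i

instance (W : Finset (Set V)) : Std.Symm (c.Linked W) where
  symm _ _ := fun ⟨hu, hv, huv, i, hi, hui, hvi⟩ => ⟨hv, hu, huv.symm, i, hi, hvi, hui⟩

def IsLinked (W : Finset (Set V)) : Prop :=
  ∀ u ∈ W, ∀ v ∈ W, ReflTransGen (c.Linked W) u v

noncomputable def innerStars (W : Finset (Set V)) : Finset (Set V) :=
  c.I.filter fun i => 2 ≤ (c.N i ∩ W).card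

lemma mem_innerStars {W : Finset (Set V)} {i : Set V} :
    i ∈ c.innerStars W ↔ i ∈ c.I ∧ 2 ≤ (c.N i ∩ W).card :=
  mem_filter

lemma innerStars_subset (W : Finset (Set V)) : c.innerStars W ⊆ c.I :=
  filter_subset _ _

lemma card_innerStars_add_le {W₁ W₂ : Finset (Set V)} (h : Disjoint W₁ W₂) :
    (c.innerStars W₁).card + (c.innerStars W₂).card ≤ c.I.card := by
  have hdisj : Disjoint (c.innerStars W₁) (c.innerStars W₂) := by
    refine disjoint_left.mpr fun i hi₁ hi₂ => ?_
    obtain ⟨hi, h₁⟩ := c.mem_innerStars.mp hi₁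
    have h₂ := (c.mem_innerStars.mp hi₂).2
    have hsub := card_le_card (union_subset (inter_subset_left (s₁ := c.N i) (s₂ := W₁))
      (inter_subset_left (s₁ := c.N i) (s₂ := W₂)))
    rw [card_union_of_disjoint (h.mono inter_subset_right inter_subset_right), c.card_N i hi]
      at hsub
    omega
  rw [← card_union_of_disjoint hdisj]
  exact card_le_card (union_subset (c.innerStars_subset _) (c.innerStars_subset _))

lemma induce_sUnion_connected {W : Finset (Set V)} (hW : W ⊆ c.A) (hne : W.Nonempty)
    (hlink : c.IsLinked W) : (G.induce (⋃₀ ↑(W ∪ c.innerStars W))).Connected := by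
  obtain ⟨w₀, hw₀⟩ := hne
  have hT : W ∪ c.innerStars W ⊆ c.A ∪ c.I := union_subset_union hW (c.innerStars_subset W)
  set R := fun s t => t ∈ (↑(W ∪ c.innerStars W) : Set (Set V)) ∧ G.Touches s t
  -- a link between two branch sets of `W` runs through a star of `innerStars W`
  have reach : ∀ w, ReflTransGen (c.Linked W) w₀ w → ReflTransGen R w₀ w := by
    intro w hw
    induction hw with
    | refl => exact .refl
    | tail _ hbw ih =>
      obtain ⟨hb, hw, hbw, i, hi, hbi, hwi⟩ := hbw
      have hinner : i ∈ c.innerStars W := c.mem_innerStars.mpr ⟨hi, by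
        simpa [hbw] using card_le_card (s := {_, _}) (insert_subset_iff.mpr
          ⟨mem_inter.mpr ⟨hbi, hb⟩, singleton_subset_iff.mpr (mem_inter.mpr ⟨hwi, hw⟩)⟩)⟩
      exact (ih.tail ⟨by simp [hinner], (c.touches i hi _ hbi).symm⟩).tail
        ⟨by simp [hw], c.touches i hi _ hwi⟩
  refine induce_sUnion_connected_of_reflTransGen (s₀ := w₀) (by simp [hw₀])
    (fun s hs => c.connected s (hT hs)) fun s hs => ?_
  rcases mem_union.mp hs with hs | hs
  · exact reach s (hlink w₀ hw₀ s hs)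
  · obtain ⟨hsI, h2⟩ := c.mem_innerStars.mp hs
    obtain ⟨w, hw⟩ := card_pos.mp (by omega : 0 < (c.N s ∩ W).card)
    exact (reach w (hlink w₀ hw₀ w (mem_inter.mp hw).2)).tail
      ⟨by simp [hs], (c.touches s hsI w (mem_inter.mp hw).1).symm⟩

lemma disjoint_sUnion_of_mem_sdiff {W : Finset (Set V)} (hW : W ⊆ c.A) {t : Set V}
    (ht : t ∈ (c.A \ W) ∪ (c.I \ c.innerStars W)) :
    Disjoint t (⋃₀ ↑(W ∪ c.innerStars W)) := by
  have htT : t ∈ c.A ∪ c.I ∧ t ∉ W ∪ c.innerStars W := by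
    rcases mem_union.mp ht with ht | ht <;> obtain ⟨ht, htW⟩ := mem_sdiff.mp ht
    · have : t ∉ c.innerStars W := fun hi => c.ne_of_mem_A_of_mem_I ht (c.innerStars_subset W hi) rfl
      exact ⟨mem_union_left _ ht, by simp [htW, this]⟩
    · have : t ∉ W := fun hi => c.ne_of_mem_A_of_mem_I (hW hi) ht rfl
      exact ⟨mem_union_right _ ht, by simp [htW, this]⟩
  refine Set.disjoint_sUnion_right.mpr fun s hs => c.disjoint_of_mem htT.1 ?_ ?_
  · exact union_subset_union hW (c.innerStars_subset W) (mem_coe.mp hs)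
  · exact fun h => htT.2 (h ▸ mem_coe.mp hs)

noncomputable def component (D : Finset (Set V)) (u : Set V) : Finset (Set V) :=
  D.filter (ReflTransGen (c.Linked D) u)

/-- Merge the branch sets `W` into the single branch set `z` and drop the stars `J`; the
remaining stars are redirected from `W` to `z`. -/
lemma exists_merge {W J : Finset (Set V)} {z : Set V} (hz : (G.induce z).Connected)
    (hWz : ∀ w ∈ W, w ⊆ z) (hdisj : ∀ t ∈ (c.A \ W) ∪ (c.I \ J), Disjoint t z)
    (hJ : ∀ i ∈ c.I \ J, (c.N i ∩ W).card ≤ 1) :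
    ∃ c' : StarConfig G, c'.A.card = (c.A \ W).card + 1 ∧ c'.I = c.I \ J := by
  have hR : (c.A \ W) ∪ (c.I \ J) ⊆ c.A ∪ c.I := union_subset_union sdiff_subset sdiff_subset
  have hzR : z ∉ (c.A \ W) ∪ (c.I \ J) := fun h =>
    (Set.nonempty_coe_sort.mp hz.nonempty).ne_empty (disjoint_self.mp (hdisj z h))
  have hzA : z ∉ c.A \ W := fun h => hzR (mem_union_left _ h)
  let f : Set V → Set V := fun a => if a ∈ W then z else a
  have hf : ∀ i ∈ c.I \ J, ∀ a ∈ c.N i, f a ∈ insert z (c.A \ W) := by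
    intro i hi a ha
    by_cases haW : a ∈ W <;> simp [f, haW, c.N_subset i (mem_sdiff.mp hi).1 ha]
  refine ⟨{
    A := insert z (c.A \ W)
    I := c.I \ J
    N := fun i => (c.N i).image f
    connected := fun s hs => by
      rw [insert_union, mem_insert] at hs
      rcases hs with rfl | hs
      exacts [hz, c.connected s (hR hs)]
    pairwiseDisjoint := by
      rw [insert_union, coe_insert, Set.pairwise_insert]
      exact ⟨c.pairwiseDisjoint.mono (coe_subset.mpr hR),
        fun t ht _ => ⟨(hdisj t ht).symm, hdisj t ht⟩⟩
    disjoint_A_I := disjoint_insert_left.mpr ⟨fun h => hzR (mem_union_right _ h),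
      c.disjoint_A_I.mono sdiff_subset sdiff_subset⟩
    N_subset := fun i hi => image_subset_iff.mpr (hf i hi)
    card_N := fun i hi => (card_image_of_injOn
      (injOn_ite_mem (c.N_subset i (mem_sdiff.mp hi).1) hzA (hJ i hi))).trans
        (c.card_N i (mem_sdiff.mp hi).1)
    touches := fun i hi a' ha' => by
      obtain ⟨a, ha, rfl⟩ := mem_image.mp ha'
      have := c.touches i (mem_sdiff.mp hi).1 a ha
      by_cases haW : a ∈ W <;> simp only [f, haW, if_true, if_false]
      exacts [this.mono le_rfl (hWz a haW), this] }, card_insert_of_notMem hzA, rfl⟩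

/-- The contraction of a linked `W` together with its inner stars. -/
theorem exists_contract {W : Finset (Set V)} (hW : W ⊆ c.A) (hW2 : 2 ≤ W.card)
    (hlink : c.IsLinked W) :
    ∃ c' : StarConfig G, c'.A.card + W.card = c.A.card + 1 ∧
      c'.I.card + (c.innerStars W).card = c.I.card := by
  have hJ : ∀ i ∈ c.I \ c.innerStars W, (c.N i ∩ W).card ≤ 1 := fun i hi => by
    by_contra h
    exact (mem_sdiff.mp hi).2 (c.mem_innerStars.mpr ⟨(mem_sdiff.mp hi).1, by omega⟩)
  obtain ⟨c', hA, hI⟩ := c.exists_merge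
    (c.induce_sUnion_connected hW (card_pos.mp (by omega)) hlink)
    (fun w hw => Set.subset_sUnion_of_mem (by simp [hw]))
    (fun t ht => c.disjoint_sUnion_of_mem_sdiff hW ht) hJ
  have := card_le_card hW
  have := card_le_card (c.innerStars_subset W)
  refine ⟨c', ?_, ?_⟩
  · rw [hA, card_sdiff_of_subset hW]
    omega
  · rw [hI, card_sdiff_of_subset (c.innerStars_subset W)]
    omega

/-- A `K₃,₃`-minor-free configuration has at most `2|A| - 4` stars: this is the bound `2n - 4`
on the edges of a bipartite planar graph, applied to the contracted graph with its `3|I|` edges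
on `|A| + |I|` vertices. -/
def Overfull : Prop :=
  c.I.Nonempty ∧ 2 * c.A.card ≤ c.I.card + 3

def IsSeparation (B : Finset (Set V)) : Prop :=
  B ⊆ c.A ∧ B.Nonempty ∧ B ≠ c.A ∧ ∀ i ∈ c.I, c.N i ⊆ B ∨ Disjoint (c.N i) B

def HasSmallerOverfull : Prop :=
  ∃ c' : StarConfig G, c'.Overfull ∧ c'.A.card < c.A.card

end

variable {c : StarConfig G}

lemma Overfull.of_three_le_card_A (h3 : 3 ≤ c.A.card) (h : 2 * c.A.card ≤ c.I.card + 3) :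
    c.Overfull :=
  ⟨card_pos.mp (by omega), h⟩

lemma hasSmallerOverfull_of_card_filter_mem_N_le (hc : c.Overfull) {a : Set V} (ha : a ∈ c.A)
    (h : (c.I.filter (a ∈ c.N ·)).card ≤ 2) : c.HasSmallerOverfull := by
  have hN : ∀ i ∈ c.I.filter (a ∉ c.N ·), c.N i ⊆ c.A.erase a := fun i hi =>
    subset_erase.mpr ⟨c.N_subset i (mem_filter.mp hi).1, (mem_filter.mp hi).2⟩
  have hcard := card_filter_add_card_filter_not (s := c.I) (a ∈ c.N ·)
  have h3 := c.three_le_card_A hc.1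
  have hA := card_erase_of_mem ha
  have := hc.2
  refine ⟨c.restrict _ _ (erase_subset a c.A) (filter_subset _ _) hN,
    ⟨card_pos.mp ?_, ?_⟩, ?_⟩ <;> simp only [restrict] <;> omega

lemma hasSmallerOverfull_of_isSeparation (hc : c.Overfull) {B : Finset (Set V)}
    (hsep : c.IsSeparation B) : c.HasSmallerOverfull := by
  obtain ⟨hB, hBne, hBA, hsep⟩ := hsep
  have hIB : ∀ i ∈ c.I.filter (c.N · ⊆ B), c.N i ⊆ B := fun i hi => (mem_filter.mp hi).2
  have hIC : ∀ i ∈ c.I.filter (¬ c.N · ⊆ B), c.N i ⊆ c.A \ B := fun i hi => by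
    obtain ⟨hi, hiB⟩ := mem_filter.mp hi
    exact subset_sdiff.mpr ⟨c.N_subset i hi, (hsep i hi).resolve_left hiB⟩
  have hcard := card_filter_add_card_filter_not (s := c.I) (c.N · ⊆ B)
  have hB1 := card_pos.mpr hBne
  have hBlt := card_lt_card (Finset.ssubset_iff_subset_ne.mpr ⟨hB, hBA⟩)
  have hAB := card_sdiff_of_subset hB
  have hI := card_pos.mpr hc.1
  have := hc.2
  by_cases hgood : 0 < (c.I.filter (c.N · ⊆ B)).card ∧
      2 * B.card ≤ (c.I.filter (c.N · ⊆ B)).card + 3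
  · exact ⟨c.restrict _ _ hB (filter_subset _ _) hIB, ⟨card_pos.mp hgood.1, hgood.2⟩, hBlt⟩
  · refine ⟨c.restrict _ _ sdiff_subset (filter_subset _ _) hIC, ⟨card_pos.mp ?_, ?_⟩, ?_⟩ <;>
      simp only [restrict] <;> omega

lemma hasSmallerOverfull_of_contract {W : Finset (Set V)} (hW : W ⊆ c.A) (hW2 : 2 ≤ W.card)
    (hWA : W.card + 2 ≤ c.A.card) (hlink : c.IsLinked W)
    (h : 2 * c.A.card + (c.innerStars W).card ≤ c.I.card + 2 * W.card + 1) :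
    c.HasSmallerOverfull := by
  obtain ⟨c', hA, hI⟩ := c.exists_contract hW hW2 hlink
  exact ⟨c', .of_three_le_card_A (by omega) (by omega), by omega⟩

lemma mem_component {D : Finset (Set V)} {u x : Set V} :
    x ∈ c.component D u ↔ x ∈ D ∧ ReflTransGen (c.Linked D) u x :=
  mem_filter

lemma reflTransGen_linked_of_forall {D E : Finset (Set V)} {x y : Set V}
    (hE : ∀ z ∈ D, ReflTransGen (c.Linked D) x z → z ∈ E)
    (h : ReflTransGen (c.Linked D) x y) : ReflTransGen (c.Linked E) x y := by
  induction h with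
  | refl => exact .refl
  | tail hxp hpq ih =>
    obtain ⟨hp, hq, hne, hi⟩ := hpq
    exact ih.tail ⟨hE _ hp hxp, hE _ hq (hxp.tail ⟨hp, hq, hne, hi⟩), hne, hi⟩

lemma isLinked_component (D : Finset (Set V)) (u : Set V) : c.IsLinked (c.component D u) := by
  have lift : ∀ x ∈ c.component D u, ReflTransGen (c.Linked (c.component D u)) u x :=
    fun x hx => reflTransGen_linked_of_forall (fun z hz hz' => mem_component.mpr ⟨hz, hz'⟩)
      (mem_component.mp hx).2
  exact fun x hx y hy => (Std.Symm.symm _ _ (lift x hx)).trans (lift y hy)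

lemma notMem_component_of_reflTransGen {D : Finset (Set V)} {u x y : Set V} (hx : x ∈ D)
    (hxu : x ∉ c.component D u) (hxy : ReflTransGen (c.Linked D) x y) :
    y ∉ c.component D u := fun hy =>
  hxu (mem_component.mpr ⟨hx, (mem_component.mp hy).2.trans (Std.Symm.symm _ _ hxy)⟩)

lemma exists_linked_out_of_component
    (hsep : ∀ B, ¬ c.IsSeparation B)
    {D : Finset (Set V)} (hD : D ⊂ c.A) {x : Set V} (hx : x ∈ D) :
    ∃ x' ∈ c.component D x, ∃ y ∈ c.A \ D, ∃ i ∈ c.I, x' ∈ c.N i ∧ y ∈ c.N i := by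
  by_contra! hout
  have hKD : c.component D x ⊆ D := filter_subset _ _
  refine hsep _ ⟨hKD.trans hD.subset, ⟨x, mem_component.mpr ⟨hx, .refl⟩⟩,
    fun h => hD.ne (hD.subset.antisymm (h ▸ hKD)), fun i hi => ?_⟩
  refine or_iff_not_imp_right.mpr fun hmeet q hq => ?_
  obtain ⟨p, hpN, hpK⟩ := not_disjoint_iff.mp hmeet
  obtain ⟨hpD, hxp⟩ := mem_component.mp hpK
  by_cases hqD : q ∈ D
  · rcases eq_or_ne p q with rfl | hpq
    · exact hpK
    · exact mem_component.mpr ⟨hqD, hxp.tail ⟨hpD, hqD, hpq, i, hi, hpN, hq⟩⟩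
  · exact absurd hq (hout p hpK q (mem_sdiff.mpr ⟨c.N_subset i hi hq, hqD⟩) i hi hpN)

/-- Every other component of `A \ {a, b}` is linked to `a` or `b`, as it is not a separation,
and `a`, `b` share the star `s₀`. -/
lemma isLinked_sdiff_component
    (hsep : ∀ B, ¬ c.IsSeparation B)
    {s₀ a b : Set V} (hs₀ : s₀ ∈ c.I) (ha : a ∈ c.N s₀) (hb : b ∈ c.N s₀) (hab : a ≠ b)
    (u : Set V) : c.IsLinked (c.A \ c.component (c.A \ {a, b}) u) := by
  set D := c.A \ {a, b}
  set K := c.component D u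
  have haA := c.N_subset s₀ hs₀ ha
  have hbA := c.N_subset s₀ hs₀ hb
  have hDA : D ⊂ c.A := sdiff_ssubset (by simp [insert_subset_iff, haA, hbA]) (by simp)
  have habK : a ∈ c.A \ K ∧ b ∈ c.A \ K := by
    simp [K, D, mem_component, haA, hbA]
  have hba : c.Linked (c.A \ K) b a := ⟨habK.2, habK.1, hab.symm, s₀, hs₀, hb, ha⟩
  have reach : ∀ x ∈ c.A \ K, ReflTransGen (c.Linked (c.A \ K)) x a := by
    intro x hx
    obtain ⟨hxA, hxK⟩ := mem_sdiff.mp hx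
    by_cases hxD : x ∈ D
    · obtain ⟨x', hx', y, hy, i, hi, hx'i, hyi⟩ := exists_linked_out_of_component hsep hDA hxD
      obtain ⟨hx'D, hxx'⟩ := mem_component.mp hx'
      have hpath : ReflTransGen (c.Linked (c.A \ K)) x x' :=
        reflTransGen_linked_of_forall (fun z hz hxz => mem_sdiff.mpr
          ⟨sdiff_subset hz, notMem_component_of_reflTransGen hxD hxK hxz⟩) hxx'
      have hyab : y = a ∨ y = b := by simpa [D, (mem_sdiff.mp hy).1] using hy
      have hx'y : c.Linked (c.A \ K) x' y :=
        ⟨mem_sdiff.mpr ⟨sdiff_subset hx'D, notMem_component_of_reflTransGen hxD hxK hxx'⟩, by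
          rcases hyab with rfl | rfl; exacts [habK.1, habK.2],
          fun h => (mem_sdiff.mp hy).2 (h ▸ hx'D), i, hi, hx'i, hyi⟩
      rcases hyab with rfl | rfl
      exacts [hpath.tail hx'y, (hpath.tail hx'y).tail hba]
    · rcases or_iff_not_imp_left.mpr (by simpa [D, hxA] using hxD) with rfl | rfl
      exacts [.refl, .single hba]
  exact fun x hx y hy => (reach x hx).trans (Std.Symm.symm _ _ (reach y hy))

/-- A component `K` of `A \ {a, b}` with two branch sets and its complement are both linked,
and no star is inner to both, so one of them can be contracted. -/
lemma false_of_linked (hc : c.Overfull)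
    (hsep : ∀ B, ¬ c.IsSeparation B)
    (hcontr : ∀ W ⊆ c.A, 2 ≤ W.card → W.card + 2 ≤ c.A.card → c.IsLinked W →
      c.I.card + 2 * W.card + 2 ≤ 2 * c.A.card + (c.innerStars W).card)
    {s₀ a b u v : Set V} (hs₀ : s₀ ∈ c.I) (ha : a ∈ c.N s₀) (hb : b ∈ c.N s₀) (hab : a ≠ b)
    (huv : c.Linked (c.A \ {a, b}) u v) : False := by
  set D := c.A \ {a, b}
  set K := c.component D u
  have haA := c.N_subset s₀ hs₀ ha
  have hbA := c.N_subset s₀ hs₀ hb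
  have hKD : K ⊆ D := filter_subset _ _
  have hKA : K ⊆ c.A := hKD.trans sdiff_subset
  have hD : D.card + 2 = c.A.card := by
    have hsub : {a, b} ⊆ c.A := by simp [insert_subset_iff, haA, hbA]
    have := card_pair hab ▸ card_le_card hsub
    rw [card_sdiff_of_subset hsub, card_pair hab]
    omega
  have hK2 : 2 ≤ K.card := one_lt_card.mpr ⟨u, mem_component.mpr ⟨huv.1, .refl⟩,
    v, mem_component.mpr ⟨huv.2.1, .single huv⟩, huv.2.2.1⟩
  have hAK2 : 2 ≤ (c.A \ K).card := one_lt_card.mpr ⟨a, by simp [K, D, mem_component, haA],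
    b, by simp [K, D, mem_component, hbA], hab⟩
  have hK := card_le_card hKD
  have hAK := card_sdiff_of_subset hKA
  have h₁ := hcontr K hKA hK2 (by omega) (isLinked_component D u)
  have h₂ := hcontr (c.A \ K) sdiff_subset hAK2 (by omega)
    (isLinked_sdiff_component hsep hs₀ ha hb hab u)
  have h₃ := c.card_innerStars_add_le (disjoint_sdiff : Disjoint K (c.A \ K))
  have := hc.2
  omega

lemma N_eq_of_forall_not_linked {s₀ a b d i : Set V} (hN : c.N s₀ = {a, b, d})
    (hda : d ≠ a) (hdb : d ≠ b) (hdA : d ∈ c.A) (hD : ∀ u v, ¬ c.Linked (c.A \ {a, b}) u v)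
    (hi : i ∈ c.I) (hdi : d ∈ c.N i) (hs₀ : s₀ ∈ c.I) : c.N i = c.N s₀ := by
  refine eq_of_subset_of_card_le (fun x hx => ?_) (by rw [c.card_N i hi, c.card_N s₀ hs₀])
  by_contra hxN
  rw [hN] at hxN
  simp only [mem_insert, mem_singleton, not_or] at hxN
  exact hD d x ⟨by simp [hdA, hda, hdb], by simp [c.N_subset i hi hx, hxN.1, hxN.2.1],
    fun h => hxN.2.2 h.symm, i, hi, hdi, hx⟩

theorem hasSmallerOverfull (hc : c.Overfull)
    (hG : ¬ HasMinor G (completeBipartiteGraph (Fin 3) (Fin 3))) : c.HasSmallerOverfull := by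
  by_contra hirr
  have h_eq : ∀ M, (c.I.filter (c.N · = M)).card ≤ 2 := fun M => by
    by_contra h
    exact hG (c.hasMinor_of_three_le_card_filter_N_eq M (by omega))
  have h_deg : ∀ a ∈ c.A, 3 ≤ (c.I.filter (a ∈ c.N ·)).card := fun a ha => by
    by_contra h
    exact hirr (hasSmallerOverfull_of_card_filter_mem_N_le hc ha (by omega))
  have h_sep : ∀ B, ¬ c.IsSeparation B := fun _ hB => hirr (hasSmallerOverfull_of_isSeparation hc hB)
  have h_contr : ∀ W ⊆ c.A, 2 ≤ W.card → W.card + 2 ≤ c.A.card → c.IsLinked W →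
      c.I.card + 2 * W.card + 2 ≤ 2 * c.A.card + (c.innerStars W).card := fun W hW h2 hn hl => by
    by_contra h
    exact hirr (hasSmallerOverfull_of_contract hW h2 hn hl (by omega))
  obtain ⟨s₀, hs₀⟩ := hc.1
  obtain ⟨a, b, d, hab, had, hbd, hN⟩ := card_eq_three.mp (c.card_N s₀ hs₀)
  by_cases hD : ∃ u v, c.Linked (c.A \ {a, b}) u v
  · obtain ⟨u, v, huv⟩ := hD
    exact false_of_linked hc h_sep h_contr hs₀ (by simp [hN]) (by simp [hN]) hab huv
  -- otherwise every star at `d` has the same branch sets as `s₀`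
  push Not at hD
  have hdA : d ∈ c.A := c.N_subset s₀ hs₀ (by simp [hN])
  have hsub : c.I.filter (d ∈ c.N ·) ⊆ c.I.filter (c.N · = c.N s₀) := fun i hi => by
    obtain ⟨hi, hdi⟩ := mem_filter.mp hi
    exact mem_filter.mpr ⟨hi, N_eq_of_forall_not_linked hN had.symm hbd.symm hdA hD hi hdi hs₀⟩
  have := card_le_card hsub
  have := h_deg d hdA
  have := h_eq (c.N s₀)
  omega

theorem hasMinor_of_overfull (hc : c.Overfull) :
    HasMinor G (completeBipartiteGraph (Fin 3) (Fin 3)) := by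
  by_contra hG
  induction hn : c.A.card using Nat.strong_induction_on generalizing c with
  | _ n ih =>
    obtain ⟨c', hc', hlt⟩ := hasSmallerOverfull hc hG
    exact ih _ (hn ▸ hlt) hc' rfl

lemma exists_of_three_le_card_filter_touches (A I : Finset (Set V))
    (hconn : ∀ s ∈ A ∪ I, (G.induce s).Connected)
    (hdisj : (↑(A ∪ I) : Set (Set V)).Pairwise Disjoint) (hAI : Disjoint A I)
    (htouch : ∀ i ∈ I, 3 ≤ (A.filter (G.Touches i)).card) :
    ∃ c : StarConfig G, c.A = A ∧ c.I = I := by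
  choose! N hN hN3 using fun i (hi : i ∈ I) => exists_subset_card_eq (htouch i hi)
  exact ⟨⟨A, I, N, hconn, hdisj, hAI, fun i hi => (hN i hi).trans (filter_subset _ _), hN3,
    fun i hi a ha => (mem_filter.mp (hN i hi ha)).2⟩, rfl, rfl⟩

/-- The vertices of `X` as branch sets and the components of `G - X` with at least three
neighbours in `X` as stars. -/
theorem exists_of_components [Finite V] {X : Set V}
    (S : Set (G.induce Xᶜ).ConnectedComponent)
    (hS : ∀ C ∈ S, 3 ≤ {x | x ∈ X ∧ ∃ c ∈ C.supp, G.Adj x ↑c}.ncard) :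
    ∃ c : StarConfig G, c.A.card = X.ncard ∧ c.I.card = S.ncard := by
  have hX := Set.toFinite X
  have hSfin := Set.toFinite S
  let F : (G.induce Xᶜ).ConnectedComponent → Set V := fun C => Subtype.val '' C.supp
  have hF : Injective F := fun C D h =>
    ConnectedComponent.supp_injective (Set.image_injective.mpr Subtype.val_injective h)
  have hFX : ∀ C, ∀ x ∈ X, x ∉ F C := by
    rintro C x hx ⟨v, _, rfl⟩
    exact v.2 hx
  set A := hX.toFinset.image fun x => ({x} : Set V)
  set I := hSfin.toFinset.image F
  have hconn : ∀ s ∈ A ∪ I, (G.induce s).Connected := by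
    simp only [A, I, mem_union, mem_image, Set.Finite.mem_toFinset]
    rintro s (⟨x, -, rfl⟩ | ⟨C, -, rfl⟩)
    exacts [⟨Preconnected.of_subsingleton⟩, G.induce_image_supp_connected C]
  have hdisj : (↑(A ∪ I) : Set (Set V)).Pairwise Disjoint := by
    simp only [A, I, coe_union, coe_image, Set.Finite.coe_toFinset]
    rintro s (⟨x, hx, rfl⟩ | ⟨C, -, rfl⟩) t (⟨y, hy, rfl⟩ | ⟨D, -, rfl⟩) hst
    · exact Set.disjoint_singleton.mpr fun h => hst (h ▸ rfl)
    · exact Set.disjoint_singleton_left.mpr (hFX D x hx)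
    · exact Set.disjoint_singleton_right.mpr (hFX C y hy)
    · exact Set.disjoint_image_of_injective Subtype.val_injective
        (G.induce Xᶜ |>.pairwise_disjoint_supp_connectedComponent fun h => hst (h ▸ rfl))
  have hAI : Disjoint A I := by
    simp only [A, I, Finset.disjoint_left, mem_image, Set.Finite.mem_toFinset]
    rintro _ ⟨x, hx, rfl⟩ ⟨C, -, hC⟩
    exact hFX C x hx (hC ▸ rfl)
  have htouch : ∀ i ∈ I, 3 ≤ (A.filter (G.Touches i)).card := by
    simp only [I, mem_image, Set.Finite.mem_toFinset]
    rintro _ ⟨C, hC, rfl⟩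
    refine (hS C hC).trans (le_of_eq_of_le ?_ (G.ncard_le_card_filter_touches hX))
    congr 1
    ext x
    simp [F, and_comm]
  obtain ⟨c, hcA, hcI⟩ := exists_of_three_le_card_filter_touches A I hconn hdisj hAI htouch
  refine ⟨c, ?_, ?_⟩
  · rw [hcA, card_image_of_injective _ Set.singleton_injective, Set.ncard_eq_toFinset_card X hX]
  · rw [hcI, card_image_of_injective _ hF, Set.ncard_eq_toFinset_card S hSfin]

end StarConfig

end

/-- For a finite planar graph `G` and a vertex set `X ⊆ V(G)`, the number
of connected components `C` of `G − X` with `|N_G(C)| ≥ 3` is at most `2|X|`. -/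
theorem stmt_7 {V : Type*} [Fintype V] (G : SimpleGraph V) (hG : IsPlanar G) (X : Set V) :
    {C : (G.induce Xᶜ).ConnectedComponent |
        3 ≤ {x | x ∈ X ∧ ∃ c ∈ C.supp, G.Adj x ↑c}.ncard}.ncard ≤ 2 * X.ncard := by
  by_contra! h
  obtain ⟨c, hA, hI⟩ := StarConfig.exists_of_components (G := G)
    {C | 3 ≤ {x | x ∈ X ∧ ∃ c ∈ C.supp, G.Adj x ↑c}.ncard} fun _ hC => hC
  exact hG.2 (StarConfig.hasMinor_of_overfull (c := c) ⟨card_pos.mp (by omega), by omega⟩)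
end

section
/- Let the triangulated grid ⊠ₖ be the graph on vertex set [k]×[k] with edges (i,j)–(i+1,j), (i,j)–(i,j+1), and (i,j)–(i+1,j-1) (whenever defined). Let H be a graph on vertex set [k]×[k] whose edge set contains E(⊠ₖ), let U ⊆ [k]×[k] induce a connected subgraph of ⊠ₖ, and suppose there exist distinct x, y ∈ U such that x = (i,j) with 3 ≤ i,j ≤ k−2, all 25 vertices of the 5×5 subgrid centered at x are in U, and xy ∈ E(H) \ E(⊠ₖ). Then H[U] contains K₅ as a minor (hence is not planar). -/
/-- The triangulated grid `⊠ₖ` on vertex set `Fin k × Fin k` (0-indexed), with edges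
`(i,j)–(i+1,j)`, `(i,j)–(i,j+1)` and `(i,j)–(i+1,j-1)` whenever defined. -/
def triGrid (k : ℕ) : SimpleGraph (Fin k × Fin k) :=
  SimpleGraph.fromRel fun a b =>
    (b.1.val = a.1.val + 1 ∧ b.2 = a.2) ∨
    (b.1 = a.1 ∧ b.2.val = a.2.val + 1) ∨
    (b.1.val = a.1.val + 1 ∧ a.2.val = b.2.val + 1)

/-!
The six grid neighbours of `x` form a hexagon; cut into three arcs, these are pairwise adjacent
and all adjacent to `x`. The other 18 vertices of `T[x]` form a connected ring touching all three
arcs. A walk in `U` from `y` to `x` reaches the closed neighbourhood of `x` from a vertex of that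
ring, because `x` lies deep inside `T[x]`; the part of the walk before that point, glued to the
ring, is a connected set containing `y` that avoids `x` and the hexagon. With `{x}` and the edge
`xy` this gives five pairwise touching branch sets.
-/

open SimpleGraph

namespace SimpleGraph

variable {V W : Type*} {G : SimpleGraph V}

lemma connected_induce_of_isChain {l : List V} (hne : l ≠ []) (hl : l.IsChain G.Adj) :
    (G.induce {v | v ∈ l}).Connected := by
  have h := (Walk.ofSupport l hne hl).connected_induce_support
  rwa [Walk.support_ofSupport] at h

lemma Walk.exists_walk_avoiding_to_adj {N : Set V} {u v : V} (w : G.Walk u v)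
    (hu : u ∉ N) (hv : v ∈ N) :
    ∃ d, ∃ p : G.Walk u d, (∀ z ∈ p.support, z ∉ N) ∧ ∃ c ∈ N, G.Adj d c := by
  induction w with
  | nil => exact absurd hv hu
  | @cons u v _ h w ih =>
    by_cases hvN : v ∈ N
    · exact ⟨u, .nil, by simpa using hu, v, hvN, h⟩
    · obtain ⟨d, p, hp, hc⟩ := ih hvN hv
      exact ⟨d, .cons h p, by simpa [hu] using hp, hc⟩

def Embedding.codRestrict {G' : SimpleGraph W} (f : G' ↪g G) {s : Set V} (h : ∀ w, f w ∈ s) :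
    G' ↪g G.induce s where
  toFun w := ⟨f w, h w⟩
  inj' _ _ e := f.injective (congrArg Subtype.val e)
  map_rel_iff' := f.map_rel_iff

@[simp]
lemma Embedding.coe_codRestrict_apply {G' : SimpleGraph W} (f : G' ↪g G) {s : Set V}
    (h : ∀ w, f w ∈ s) (w : W) : (f.codRestrict h w : V) = f w :=
  rfl

end SimpleGraph

instance (k : ℕ) : DecidableRel (triGrid k).Adj := fun a b =>
  decidable_of_iff' _ (fromRel_adj _ a b)

def triGridWindow {k m : ℕ} (i j : ℕ) (hi : i + m ≤ k) (hj : j + m ≤ k) :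
    triGrid m ↪g triGrid k where
  toFun p := (⟨i + p.1, by omega⟩, ⟨j + p.2, by omega⟩)
  inj' p q h := by
    simp only [Prod.ext_iff, Fin.ext_iff] at h ⊢
    omega
  map_rel_iff' {p q} := by
    change (triGrid k).Adj (⟨i + p.1, _⟩, ⟨j + p.2, _⟩) (⟨i + q.1, _⟩, ⟨j + q.2, _⟩) ↔ _
    simp only [triGrid, fromRel_adj, ne_eq, Prod.ext_iff, Fin.ext_iff]
    omega

def triGridInterior (m : ℕ) : Set (Fin m × Fin m) :=
  {c | 1 ≤ c.1.val ∧ c.1.val + 2 ≤ m ∧ 1 ≤ c.2.val ∧ c.2.val + 2 ≤ m}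

instance (m : ℕ) : DecidablePred (· ∈ triGridInterior m) := fun c => by
  unfold triGridInterior; infer_instance

section triGridWindow

variable {k m i j : ℕ} {hi : i + m ≤ k} {hj : j + m ≤ k}

@[simp]
lemma triGridWindow_fst_val (p : Fin m × Fin m) : (triGridWindow i j hi hj p).1.val = i + p.1 :=
  rfl

@[simp]
lemma triGridWindow_snd_val (p : Fin m × Fin m) : (triGridWindow i j hi hj p).2.val = j + p.2 :=
  rfl

lemma mem_range_triGridWindow_of_adj {c : Fin m × Fin m} (hc : c ∈ triGridInterior m)
    {d : Fin k × Fin k} (hd : (triGrid k).Adj d (triGridWindow i j hi hj c)) :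
    d ∈ Set.range (triGridWindow i j hi hj) := by
  obtain ⟨_, _, _, _⟩ := hc
  have h₁ := triGridWindow_fst_val (hi := hi) (hj := hj) c
  have h₂ := triGridWindow_snd_val (hi := hi) (hj := hj) c
  generalize triGridWindow i j hi hj c = w at hd h₁ h₂
  simp only [triGrid, fromRel_adj, ne_eq, Prod.ext_iff, Fin.ext_iff] at hd
  refine ⟨(⟨d.1 - i, by omega⟩, ⟨d.2 - j, by omega⟩), ?_⟩
  simp only [triGridWindow_fst_val, triGridWindow_snd_val, Prod.ext_iff, Fin.ext_iff]
  omega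

end triGridWindow

def windowHub : Fin 5 × Fin 5 := (2, 2)

/-- Branch sets of a `K₅`-model in `⊠₅` plus an edge from the hub to the outer ring, each listed
along a path: the hub, the hexagon of its neighbours cut into three arcs, and the outer ring. -/
def windowBranch : Fin 5 → List (Fin 5 × Fin 5) :=
  ![[(2, 2)], [(3, 2)], [(2, 3), (1, 3), (1, 2)], [(2, 1), (3, 1)],
    [(0, 0), (0, 1), (0, 2), (0, 3), (0, 4), (1, 4), (2, 4), (3, 4), (4, 4), (4, 3), (3, 3),
      (4, 2), (4, 1), (4, 0), (3, 0), (2, 0), (1, 0), (1, 1)]]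

lemma windowBranch_ne_nil : ∀ b, windowBranch b ≠ [] := by decide

lemma isChain_windowBranch : ∀ b, (windowBranch b).IsChain (triGrid 5).Adj := by decide

lemma eq_of_mem_windowBranch :
    ∀ b₁ b₂ e, e ∈ windowBranch b₁ → e ∈ windowBranch b₂ → b₁ = b₂ := by
  decide

lemma exists_adj_windowBranch : ∀ b₁ b₂ : Fin 5, b₁ ≠ b₂ → ¬(b₁ = 0 ∧ b₂ = 4) →
    ¬(b₁ = 4 ∧ b₂ = 0) →
      ∃ e₁ ∈ windowBranch b₁, ∃ e₂ ∈ windowBranch b₂, (triGrid 5).Adj e₁ e₂ := by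
  decide

lemma mem_triGridInterior_of_notMem_windowBranch_four :
    ∀ e, e ∉ windowBranch 4 → e ∈ triGridInterior 5 := by
  decide

lemma eq_windowHub_or_adj_of_notMem_windowBranch_four :
    ∀ e, e ∉ windowBranch 4 → e = windowHub ∨ (triGrid 5).Adj windowHub e := by
  decide

section windowModel

variable {V : Type*} {G₀ G : SimpleGraph V} (ψ : triGrid 5 ↪g G₀)

lemma exists_walk_to_windowBranch_four (hconn : G₀.Preconnected)
    (hclosed : ∀ c ∈ triGridInterior 5, ∀ d, G₀.Adj d (ψ c) → d ∈ Set.range ψ)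
    {y : V} (hy : y ≠ ψ windowHub) (hy' : ¬ G₀.Adj (ψ windowHub) y) :
    ∃ e ∈ windowBranch 4, ∃ p : G₀.Walk y (ψ e),
      ∀ z ∈ p.support, z ∉ ψ '' {c | c ∉ windowBranch 4} := by
  have hyN : y ∉ ψ '' {e | e ∉ windowBranch 4} := by
    rintro ⟨e, he, rfl⟩
    rcases eq_windowHub_or_adj_of_notMem_windowBranch_four e he with rfl | h
    exacts [hy rfl, hy' (ψ.map_rel_iff.2 h)]
  obtain ⟨d, p, hpN, _, ⟨c, hc, rfl⟩, hdc⟩ :=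
    (hconn y (ψ windowHub)).some.exists_walk_avoiding_to_adj hyN ⟨windowHub, by decide, rfl⟩
  obtain ⟨e, rfl⟩ := hclosed c (mem_triGridInterior_of_notMem_windowBranch_four c hc) d hdc
  refine ⟨e, ?_, p, hpN⟩
  by_contra he
  exact hpN _ p.end_mem_support ⟨e, he, rfl⟩

theorem hasMinor_top_of_walk_to_windowBranch_four (hle : G₀ ≤ G) {y : V}
    (hedge : G.Adj (ψ windowHub) y) {e : Fin 5 × Fin 5} (he : e ∈ windowBranch 4)
    (p : G₀.Walk y (ψ e)) (hpN : ∀ z ∈ p.support, z ∉ ψ '' {c | c ∉ windowBranch 4}) :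
    HasMinor G (⊤ : SimpleGraph (Fin 5)) := by
  have hbranch_conn : ∀ b, (G₀.induce {z | z ∈ (windowBranch b).map ψ}).Connected := fun b =>
    connected_induce_of_isChain (by simpa using windowBranch_ne_nil b)
      (List.isChain_map_of_isChain ψ (fun _ _ h => ψ.map_rel_iff.2 h) (isChain_windowBranch b))
  refine ⟨fun b => {z | z ∈ (windowBranch b).map ψ} ∪ {z | b = 4 ∧ z ∈ p.support}, ?_, ?_, ?_, ?_⟩
  · intro b
    obtain ⟨e₀, he₀⟩ := List.exists_mem_of_ne_nil _ (windowBranch_ne_nil b)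
    exact ⟨ψ e₀, Or.inl (List.mem_map_of_mem he₀)⟩
  · intro b
    refine Connected.mono (G := G₀.induce _) (fun _ _ h => hle h) ?_
    beta_reduce
    by_cases hb : b = 4
    · subst hb
      rw [show {z | (4 : Fin 5) = 4 ∧ z ∈ p.support} = {z | z ∈ p.support} by simp]
      exact induce_union_connected (hbranch_conn 4).preconnected
        p.connected_induce_support.preconnected ⟨ψ e, List.mem_map_of_mem he, p.end_mem_support⟩
    · rw [show {z | b = 4 ∧ z ∈ p.support} = ∅ by simp [hb], Set.union_empty]
      exact hbranch_conn b
  · intro b₁ b₂ hb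
    rw [Function.onFun, Set.disjoint_left]
    rintro z (hz₁ | ⟨rfl, hz₁⟩) (hz₂ | ⟨rfl, hz₂⟩)
    · obtain ⟨e₁, he₁, rfl⟩ := List.mem_map.1 hz₁
      obtain ⟨e₂, he₂, h⟩ := List.mem_map.1 hz₂
      exact hb (eq_of_mem_windowBranch b₁ b₂ e₁ he₁ (ψ.injective h ▸ he₂))
    · obtain ⟨e₁, he₁, rfl⟩ := List.mem_map.1 hz₁
      exact hpN _ hz₂ ⟨e₁, fun h => hb (eq_of_mem_windowBranch _ _ e₁ he₁ h), rfl⟩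
    · obtain ⟨e₂, he₂, rfl⟩ := List.mem_map.1 hz₂
      exact hpN _ hz₁ ⟨e₂, fun h => hb (eq_of_mem_windowBranch _ _ e₂ h he₂), rfl⟩
    · exact hb rfl
  · intro b₁ b₂ hb
    have hhub : ψ windowHub ∈ (windowBranch 0).map ψ := List.mem_map_of_mem (by decide)
    by_cases h04 : b₁ = 0 ∧ b₂ = 4
    · obtain ⟨rfl, rfl⟩ := h04
      exact ⟨_, Or.inl hhub, y, Or.inr ⟨rfl, p.start_mem_support⟩, hedge⟩
    by_cases h40 : b₁ = 4 ∧ b₂ = 0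
    · obtain ⟨rfl, rfl⟩ := h40
      exact ⟨y, Or.inr ⟨rfl, p.start_mem_support⟩, _, Or.inl hhub, hedge.symm⟩
    obtain ⟨e₁, he₁, e₂, he₂, h⟩ := exists_adj_windowBranch b₁ b₂ hb h04 h40
    exact ⟨ψ e₁, Or.inl (List.mem_map_of_mem he₁), ψ e₂, Or.inl (List.mem_map_of_mem he₂),
      hle (ψ.map_rel_iff.2 h)⟩

theorem hasMinor_top_of_triGrid_window (hle : G₀ ≤ G) (hconn : G₀.Preconnected)
    (hclosed : ∀ c ∈ triGridInterior 5, ∀ d, G₀.Adj d (ψ c) → d ∈ Set.range ψ)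
    {y : V} (hy : y ≠ ψ windowHub) (hy' : ¬ G₀.Adj (ψ windowHub) y)
    (hedge : G.Adj (ψ windowHub) y) :
    HasMinor G (⊤ : SimpleGraph (Fin 5)) :=
  have ⟨_, he, p, hpN⟩ := exists_walk_to_windowBranch_four ψ hconn hclosed hy hy'
  hasMinor_top_of_walk_to_windowBranch_four ψ hle hedge he p hpN

end windowModel

/-- Let `H` be an extension of the triangulated grid `⊠ₖ`
(`E(⊠ₖ) ⊆ E(H)`), let `U` induce a connected subgraph of `⊠ₖ`, and suppose there are
distinct `x, y ∈ U` such that `x` is internal (in 0-indexed coordinates: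
`2 ≤ x.1, x.2` and `x.1 + 3, x.2 + 3 ≤ k`), the whole `5×5` subgrid `T[x]` centered at
`x` is contained in `U`, and `xy ∈ E(H) \ E(⊠ₖ)`. Then `H[U]` contains `K₅` as a minor
(hence is not planar). -/
theorem stmt_9 (k : ℕ) (H : SimpleGraph (Fin k × Fin k)) (hext : triGrid k ≤ H)
    (U : Set (Fin k × Fin k)) (hU : ((triGrid k).induce U).Connected)
    (x y : Fin k × Fin k) (hxy : x ≠ y) (hxU : x ∈ U) (hyU : y ∈ U)
    (hi₁ : 2 ≤ x.1.val) (hi₂ : x.1.val + 3 ≤ k)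
    (hj₁ : 2 ≤ x.2.val) (hj₂ : x.2.val + 3 ≤ k)
    (hTx : ∀ p : Fin k × Fin k,
      (x.1.val - 2 ≤ p.1.val ∧ p.1.val ≤ x.1.val + 2 ∧
        x.2.val - 2 ≤ p.2.val ∧ p.2.val ≤ x.2.val + 2) → p ∈ U)
    (hedge : H.Adj x y) (hnotgrid : ¬ (triGrid k).Adj x y) :
    HasMinor (H.induce U) (⊤ : SimpleGraph (Fin 5)) := by
  let φ : triGrid 5 ↪g triGrid k := triGridWindow (x.1.val - 2) (x.2.val - 2) (by omega) (by omega)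
  have hwin : ∀ p, φ p ∈ U := by
    intro p
    apply hTx
    simp only [φ, triGridWindow_fst_val, triGridWindow_snd_val]
    omega
  let ψ := φ.codRestrict hwin
  have hx : ψ windowHub = ⟨x, hxU⟩ := by
    refine Subtype.ext (Prod.ext (Fin.ext ?_) (Fin.ext ?_)) <;>
      simp only [ψ, φ, Embedding.coe_codRestrict_apply, triGridWindow_fst_val,
        triGridWindow_snd_val, windowHub] <;> omega
  refine hasMinor_top_of_triGrid_window ψ (fun _ _ h => hext h) hU.preconnected ?_
    (y := ⟨y, hyU⟩) ?_ ?_ ?_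
  · intro c hc d hd
    obtain ⟨e, he⟩ := mem_range_triGridWindow_of_adj hc hd
    exact ⟨e, Subtype.ext he⟩
  · rw [hx]; simpa using hxy.symm
  · rw [hx]; exact hnotgrid
  · rw [hx]; exact hedge
end

section
/- Let G be a connected plane graph whose outerplanar decomposition tree has maximal depth d (where layers L₁,…,Lₘ are the outerplanarity layers and the decomposition tree is obtained by contracting each connected component of each layer). Then the radial diameter of G is at most 2d − 1. -/
/-!
Every vertex of layer `i + 1` shares a face with a vertex of layer `i`, so from any vertex `v`
one reaches the outer layer by a face-sharing sequence of `idx v ≤ d` vertices. Two vertices of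
the outer layer share the outer face, so the descent from `u` followed by the reversed descent
from `v` is a face-sharing sequence of at most `2d` vertices.
-/

namespace List

variable {α : Type*} {R : α → α → Prop}

theorem exists_isChain_descent (idx : α → ℕ)
    (hstep : ∀ v, 1 < idx v → ∃ u, idx u + 1 = idx v ∧ R v u) (v : α) (hv : 1 ≤ idx v) :
    ∃ l : List α, l.IsChain R ∧ l.head? = some v ∧
      (∃ w, l.getLast? = some w ∧ idx w = 1) ∧ l.length = idx v := by
  induction hn : idx v generalizing v with
  | zero => omega
  | succ n ih =>
    rcases Nat.eq_zero_or_pos n with rfl | hn_pos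
    · exact ⟨[v], isChain_singleton v, rfl, ⟨v, rfl, hn⟩, rfl⟩
    obtain ⟨u, hu, hvu⟩ := hstep v (by omega)
    obtain ⟨l, hl, hhead, hlast, hlen⟩ := ih u (by omega) (by omega)
    obtain ⟨t, rfl⟩ := head?_eq_some_iff.1 hhead
    refine ⟨v :: u :: t, hl.cons_cons hvu, rfl, ?_, by simp_all⟩
    simpa [getLast?_cons_cons] using hlast

theorem exists_isChain_join [Std.Symm R] {l₁ l₂ : List α} {u v a b : α}
    (h₁ : l₁.IsChain R) (hu : l₁.head? = some u) (ha : l₁.getLast? = some a)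
    (h₂ : l₂.IsChain R) (hv : l₂.head? = some v) (hb : l₂.getLast? = some b) (hab : R a b) :
    ∃ l : List α, l.IsChain R ∧ l.head? = some u ∧ l.getLast? = some v ∧
      l.length = l₁.length + l₂.length := by
  refine ⟨l₁ ++ l₂.reverse, h₁.append ?_ ?_, ?_, ?_, by simp⟩
  · exact isChain_reverse.2 (h₂.imp fun _ _ => Std.Symm.symm _ _)
  · simp_all
  · simp [head?_append, hu]
  · obtain ⟨t, rfl⟩ := head?_eq_some_iff.1 hv
    simp [getLast?_append]

end List

theorem stmt_11_general {V F : Type*}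
    (onFace : V → F → Prop) (outer : F) (idx : V → ℕ) (d : ℕ)
    (hidx : ∀ v : V, 1 ≤ idx v ∧ idx v ≤ d)
    (houter : ∀ v : V, idx v = 1 ↔ onFace v outer)
    (hlayer : ∀ v : V, 1 < idx v → ∃ u : V, idx u + 1 = idx v ∧ ∃ f, onFace u f ∧ onFace v f) :
    ∀ u v : V, ∃ l : List V,
      l.Chain' (fun a b => ∃ f, onFace a f ∧ onFace b f) ∧
      l.head? = some u ∧ l.getLast? = some v ∧ l.length ≤ 2 * d := by
  set R : V → V → Prop := fun a b => ∃ f, onFace a f ∧ onFace b f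
  have hR : Std.Symm R := ⟨fun _ _ ⟨f, ha, hb⟩ => ⟨f, hb, ha⟩⟩
  have hstep : ∀ v, 1 < idx v → ∃ u, idx u + 1 = idx v ∧ R v u := fun v hv =>
    (hlayer v hv).imp fun _ ⟨hu, huv⟩ => ⟨hu, hR.symm _ _ huv⟩
  intro u v
  obtain ⟨lu, hlu, hhu, ⟨a, hla, ha⟩, hlenu⟩ :=
    List.exists_isChain_descent idx hstep u (hidx u).1
  obtain ⟨lv, hlv, hhv, ⟨b, hlb, hb⟩, hlenv⟩ :=
    List.exists_isChain_descent idx hstep v (hidx v).1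
  obtain ⟨l, hl, hhead, hlast, hlen⟩ := List.exists_isChain_join hlu hhu hla hlv hhv hlb
    ⟨outer, (houter a).1 ha, (houter b).1 hb⟩
  exact ⟨l, hl, hhead, hlast, by have := (hidx u).2; have := (hidx v).2; omega⟩

/-- Let `G` be a connected plane graph whose outerplanar decomposition
tree has maximal depth `d`. Then the radial diameter of `G` is at most `2d − 1`.

The plane embedding is modeled by its vertex–face incidence relation `onFace` with a
distinguished outer face `outer` (adjacent vertices share a face). The outerplanarity
index `idx : V → ℕ` satisfies: every index lies in `[1, d]` (depth `d` of the
decomposition tree), the first layer is exactly the set of vertices on the outer face,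
and every vertex of layer `i+1` shares a face with a vertex of layer `i`. The conclusion
states that any two vertices `u, v` are joined by a sequence of at most `2d` vertices
(i.e. radial distance at most `2d − 1`) in which consecutive vertices share a face. -/
theorem stmt_11 {V F : Type*} (G : SimpleGraph V) (hG : G.Connected)
    (onFace : V → F → Prop) (outer : F) (idx : V → ℕ) (d : ℕ)
    (hadj : ∀ u v : V, G.Adj u v → ∃ f, onFace u f ∧ onFace v f)
    (hidx : ∀ v : V, 1 ≤ idx v ∧ idx v ≤ d)
    (houter : ∀ v : V, idx v = 1 ↔ onFace v outer)
    (hlayer : ∀ v : V, 1 < idx v → ∃ u : V, idx u + 1 = idx v ∧ ∃ f, onFace u f ∧ onFace v f) :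
    ∀ u v : V, ∃ l : List V,
      l.Chain' (fun a b => ∃ f, onFace a f ∧ onFace b f) ∧
      l.head? = some u ∧ l.getLast? = some v ∧ l.length ≤ 2 * d :=
  stmt_11_general onFace outer idx d hidx houter hlayer
end

section
/- Let S₁, S₂ be two nested vertex-disjoint restricted (v₀,v₃)-separators in a connected graph G, with G[S₁] and G[S₂] connected. If P is a path from S₁ to S₂ whose internal vertices avoid S₁ ∪ S₂, then V(P) ⊆ R_G[v₀, S₂] ∩ R_G[v₃, S₁]. -/
/-- `reach G v S` is `R_G(v, S)`: the set of vertices reachable from `v` in `G − S`,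
i.e. the vertex set of the connected component of `G − S` containing `v`. -/
def reach {V : Type*} (G : SimpleGraph V) (v : V) (S : Set V) : Set V :=
  {u | ∃ w : G.Walk v u, ∀ s ∈ S, s ∉ w.support}

/-- `S` is a restricted `(a,b)`-separator in `G`: `S` avoids `a` and `b` and meets every
`(a,b)`-path. -/
def IsRestrictedSeparator {V : Type*} (G : SimpleGraph V) (a b : V) (S : Set V) : Prop :=
  a ∉ S ∧ b ∉ S ∧ ∀ p : G.Walk a b, ∃ s ∈ S, s ∈ p.support

/-
S₁ lies in R(v₀, S₂): the first vertex of S₁ on a (v₀,v₃)-walk has a neighbour in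
R(v₀, S₁) ⊆ R(v₀, S₂), and G[S₁] is connected and misses S₂. Next, S₂ lies in
R(v₃, S₁): the first vertex of S₁ ∪ S₂ on a (v₃,v₀)-walk cannot lie in S₁, since
otherwise v₃ would be joined to S₁ ⊆ R(v₀, S₂) avoiding S₂. Finally, walking along P from
a ∈ S₁ ⊆ R(v₀, S₂) we meet S₂ only at the last vertex b, and walking back from
b ∈ S₂ ⊆ R(v₃, S₁) we meet S₁ only at a.
-/

open SimpleGraph

section Reach

variable {V : Type*} {G : SimpleGraph V} {S T : Set V} {u v x y : V}

lemma mem_reach_self (hv : v ∉ S) : v ∈ reach G v S :=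
  ⟨.nil, fun _ hs hsv => hv (Walk.mem_support_nil_iff.mp hsv ▸ hs)⟩

lemma mem_reach_trans (hu : u ∈ reach G v S) (hx : x ∈ reach G u S) : x ∈ reach G v S := by
  obtain ⟨w₁, hw₁⟩ := hu
  obtain ⟨w₂, hw₂⟩ := hx
  refine ⟨w₁.append w₂, fun s hs hsw => ?_⟩
  rcases (Walk.mem_support_append_iff w₁ w₂).mp hsw with h | h
  exacts [hw₁ s hs h, hw₂ s hs h]

lemma mem_reach_symm (hu : u ∈ reach G v S) : v ∈ reach G u S := by
  obtain ⟨w, hw⟩ := hu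
  exact ⟨w.reverse, fun s hs hsw => hw s hs (by simpa using hsw)⟩

lemma mem_reach_of_adj (hu : u ∈ reach G v S) (hux : G.Adj u x) (hx : x ∉ S) :
    x ∈ reach G v S := by
  refine mem_reach_trans hu ⟨hux.toWalk, fun s hs hsw => ?_⟩
  rcases (by simpa using hsw : s = u ∨ s = x) with rfl | rfl
  · obtain ⟨w, hw⟩ := hu
    exact hw s hs w.end_mem_support
  · exact hx hs

lemma reach_anti (hST : S ⊆ T) : reach G v T ⊆ reach G v S :=
  fun _ ⟨w, hw⟩ => ⟨w, fun s hs => hw s (hST hs)⟩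

lemma IsRestrictedSeparator.notMem_reach (h : IsRestrictedSeparator G u v S) :
    v ∉ reach G u S := fun ⟨w, hw⟩ =>
  let ⟨s, hs, hsw⟩ := h.2.2 w
  hw s hs hsw

lemma exists_adj_of_notMem_reach (hvy : G.Reachable v y) (hv : v ∉ T) (hy : y ∉ reach G v T) :
    ∃ u ∈ reach G v T, ∃ t ∈ T, G.Adj u t := by
  obtain ⟨w⟩ := hvy
  induction w with
  | nil => exact absurd (mem_reach_self hv) hy
  | @cons v v' y hvv' q ih =>
    by_cases hv' : v' ∈ T
    · exact ⟨v, mem_reach_self hv, v', hv', hvv'⟩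
    · have hv'r : v' ∈ reach G v T := mem_reach_of_adj (mem_reach_self hv) hvv' hv'
      obtain ⟨u, hu, t, ht, hut⟩ := ih hv' fun hy' => hy (mem_reach_trans hv'r hy')
      exact ⟨u, mem_reach_trans hv'r hu, t, ht, hut⟩

lemma subset_reach_of_induce_connected (hc : (G.induce S).Connected) (hST : Disjoint S T)
    (hu : u ∈ S) (hur : u ∈ reach G v T) : S ⊆ reach G v T := by
  intro x hx
  obtain ⟨w⟩ := hc.preconnected ⟨u, hu⟩ ⟨x, hx⟩
  refine mem_reach_trans hur ⟨w.map (Embedding.induce S).toHom, fun s hs hsw => ?_⟩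
  obtain ⟨z, -, rfl⟩ := List.mem_map.mp (Walk.support_map _ w ▸ hsw)
  exact hST.notMem_of_mem_left z.2 hs

lemma mem_reach_of_isPath {p : G.Walk u v} (hp : p.IsPath)
    (hpS : ∀ z ∈ p.support, z ≠ v → z ∉ S) (hx : x ∈ p.support) (hxv : x ≠ v) :
    x ∈ reach G u S := by
  classical
  refine ⟨p.takeUntil x hx, fun s hs hsw => ?_⟩
  refine hpS s (p.support_takeUntil_subset_support hx hsw) (fun hsv => ?_) hs
  exact Walk.endpoint_notMem_support_takeUntil hp hx hxv.symm (hsv ▸ hsw)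

end Reach

section NestedSeparators

variable {V : Type*} {G : SimpleGraph V} {v₀ v₃ : V} {S₁ S₂ : Set V}

lemma IsRestrictedSeparator.subset_reach_of_nested (hs₁ : IsRestrictedSeparator G v₀ v₃ S₁)
    (h : G.Reachable v₀ v₃) (hdisj : Disjoint S₁ S₂) (hc₁ : (G.induce S₁).Connected)
    (hnest : reach G v₀ S₁ ⊆ reach G v₀ S₂) : S₁ ⊆ reach G v₀ S₂ := by
  obtain ⟨u, hu, t, ht, hut⟩ := exists_adj_of_notMem_reach h hs₁.1 hs₁.notMem_reach
  exact subset_reach_of_induce_connected hc₁ hdisj ht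
    (mem_reach_of_adj (hnest hu) hut (hdisj.notMem_of_mem_left ht))

lemma IsRestrictedSeparator.subset_reach_of_subset_reach (hs₁ : IsRestrictedSeparator G v₀ v₃ S₁)
    (hs₂ : IsRestrictedSeparator G v₀ v₃ S₂) (h : G.Reachable v₀ v₃) (hdisj : Disjoint S₁ S₂)
    (hc₂ : (G.induce S₂).Connected) (hS₁ : S₁ ⊆ reach G v₀ S₂) : S₂ ⊆ reach G v₃ S₁ := by
  have hv₃ : v₃ ∉ S₁ ∪ S₂ := fun h => h.elim hs₁.2.1 hs₂.2.1
  have hv₀ : v₀ ∉ reach G v₃ (S₁ ∪ S₂) := fun h =>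
    hs₁.notMem_reach (mem_reach_symm (reach_anti Set.subset_union_left h))
  obtain ⟨u, hu, t, ht, hut⟩ := exists_adj_of_notMem_reach h.symm hv₃ hv₀
  rcases ht with ht₁ | ht₂
  · have ht : t ∈ reach G v₃ S₂ :=
      mem_reach_of_adj (reach_anti Set.subset_union_right hu) hut (hdisj.notMem_of_mem_left ht₁)
    exact absurd (mem_reach_trans (hS₁ ht₁) (mem_reach_symm ht)) hs₂.notMem_reach
  · exact subset_reach_of_induce_connected hc₂ hdisj.symm ht₂ <|
      mem_reach_of_adj (reach_anti Set.subset_union_left hu) hut (hdisj.notMem_of_mem_right ht₂)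

end NestedSeparators

/-- Let `S₁, S₂` be two nested vertex-disjoint restricted
`(v₀,v₃)`-separators in a connected graph `G`, with `G[S₁]` and `G[S₂]` connected
(nested: `R_G(v₀, S₁) ⊆ R_G(v₀, S₂)`). If `P` is a path from `S₁` to `S₂` whose internal
vertices avoid `S₁ ∪ S₂`, then `V(P) ⊆ R_G[v₀, S₂] ∩ R_G[v₃, S₁]`. -/
theorem stmt_18 {V : Type*} (G : SimpleGraph V) (hG : G.Connected)
    (v₀ v₃ : V) (S₁ S₂ : Set V) (hdisj : Disjoint S₁ S₂)
    (hc₁ : (G.induce S₁).Connected) (hc₂ : (G.induce S₂).Connected)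
    (hs₁ : IsRestrictedSeparator G v₀ v₃ S₁)
    (hs₂ : IsRestrictedSeparator G v₀ v₃ S₂)
    (hnest : reach G v₀ S₁ ⊆ reach G v₀ S₂)
    (a b : V) (ha : a ∈ S₁) (hb : b ∈ S₂)
    (p : G.Walk a b) (hp : p.IsPath)
    (hint : ∀ x ∈ p.support, x ≠ a → x ≠ b → x ∉ S₁ ∪ S₂) :
    ∀ x ∈ p.support, x ∈ (reach G v₀ S₂ ∪ S₂) ∩ (reach G v₃ S₁ ∪ S₁) := by
  have hS₁ := hs₁.subset_reach_of_nested (hG v₀ v₃) hdisj hc₁ hnest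
  have hS₂ := hs₁.subset_reach_of_subset_reach hs₂ (hG v₀ v₃) hdisj hc₂ hS₁
  have hpS₂ : ∀ z ∈ p.support, z ≠ b → z ∉ S₂ := fun z hz hzb => by
    rcases eq_or_ne z a with rfl | hza
    exacts [hdisj.notMem_of_mem_left ha, fun h => hint z hz hza hzb (Or.inr h)]
  have hpS₁ : ∀ z ∈ p.reverse.support, z ≠ a → z ∉ S₁ := fun z hz hza => by
    rw [Walk.support_reverse, List.mem_reverse] at hz
    rcases eq_or_ne z b with rfl | hzb
    exacts [hdisj.notMem_of_mem_right hb, fun h => hint z hz hza hzb (Or.inl h)]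
  intro x hx
  refine ⟨?_, ?_⟩
  · rcases eq_or_ne x b with rfl | hxb
    · exact Or.inr hb
    · exact Or.inl (mem_reach_trans (hS₁ ha) (mem_reach_of_isPath hp hpS₂ hx hxb))
  · rcases eq_or_ne x a with rfl | hxa
    · exact Or.inr ha
    · have hx' : x ∈ p.reverse.support := by simpa using hx
      exact Or.inl (mem_reach_trans (hS₂ hb) (mem_reach_of_isPath hp.reverse hpS₁ hx' hxa))
end
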